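/- arXiv:1306.3427 — 2 statements merged into one kernel-verified Lean document; each statement's English description precedes it below -/
import Mathlib

section
/- One has ∫₀^t ( c₂·g₂(z) + c₂·∫₀^z g₂(u) W′(z−u) du − C(z)·C(t)/(b·U(t)) ) dz = C(t)/(b·U(t)). (This computes the probability p that at least one individual is sampled before time t by integrating the density of the first sampling time S₁.) -/
open Real Set intervalIntegral

open MeasureTheory

/-! Swapping the order of integration over the triangle `0 < u < z ≤ t` and integrating `W'`
turns `∫₀^t ∫₀^z g₂(u) W'(z-u) du dz` into `∫₀^t g₂(u) (W(t-u) - 1) du`. Hence the first two terms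
of the density integrate to `c₂ ∫₀^t g₂(u) W(t-u) du = C(t)/b`, while the last one integrates to
`(U(t) - 1) C(t)/(b U(t))` because `U' = C`; the difference is `C(t)/(b U(t))`. -/

theorem intervalIntegral_intervalIntegral_swap_triangle {E : Type*} [NormedAddCommGroup E]
    [NormedSpace ℝ E] [CompleteSpace E] {f : ℝ → ℝ → E} {a b : ℝ} (hab : a ≤ b)
    (hf : IntegrableOn (Function.uncurry f) {p | a < p.2 ∧ p.2 < p.1 ∧ p.1 ≤ b}) :
    ∫ z in a..b, ∫ u in a..z, f z u = ∫ u in a..b, ∫ z in u..b, f z u := by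
  set F : ℝ → ℝ → E := fun z u => (Iio z).indicator (f z) u
  have hF : ∀ z u, F z u = (Ioi u).indicator (fun z => f z u) z := fun z u => by
    by_cases h : u < z <;> simp [F, h]
  have hFint : IntegrableOn (Function.uncurry F) (uIoc a b ×ˢ uIoc a b) := by
    have hlt : MeasurableSet {p : ℝ × ℝ | p.2 < p.1} :=
      measurableSet_lt measurable_snd measurable_fst
    have : Function.uncurry F = {p : ℝ × ℝ | p.2 < p.1}.indicator (Function.uncurry f) := by
      ext ⟨z, u⟩; by_cases h : u < z <;> simp [F, h]
    rw [this, IntegrableOn, integrable_indicator_iff hlt, IntegrableOn,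
      Measure.restrict_restrict hlt, uIoc_of_le hab]
    exact hf.mono_set fun p ⟨hp, ⟨_, hp1⟩, hp2, _⟩ => ⟨hp2, hp, hp1⟩
  calc ∫ z in a..b, ∫ u in a..z, f z u = ∫ z in a..b, ∫ u in a..b, F z u := by
        refine integral_congr fun z hz => ?_
        rw [uIcc_of_le hab] at hz
        rw [integral_of_le hab, integral_of_le hz.1, setIntegral_indicator measurableSet_Iio,
          integral_Ioc_eq_integral_Ioo]
        congr 2
        ext u
        simp only [mem_inter_iff, mem_Ioc, mem_Iio, mem_Ioo]
        exact ⟨fun h => ⟨⟨h.1, h.2.le.trans hz.2⟩, h.2⟩, fun h => ⟨h.1.1, h.2⟩⟩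
    _ = ∫ u in a..b, ∫ z in a..b, F z u := intervalIntegral_intervalIntegral_swap hFint
    _ = ∫ u in a..b, ∫ z in u..b, f z u := by
        refine integral_congr fun u hu => ?_
        rw [uIcc_of_le hab] at hu
        simp only [hF]
        rw [integral_of_le hab, integral_of_le hu.2, setIntegral_indicator measurableSet_Ioi,
          Ioc_inter_Ioi, sup_eq_right.2 hu.1]

theorem continuousOn_intervalIntegral_mul_comp_sub {g w : ℝ → ℝ} (hg : ContinuousOn g (Ici 0))
    (hw : ContinuousOn w (Ici 0)) :
    ContinuousOn (fun z => ∫ u in (0:ℝ)..z, g u * w (z - u)) (Ici 0) := by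
  have hmax : Continuous fun x : ℝ => max x 0 := continuous_id.max continuous_const
  have hmem : ∀ x : ℝ, max x 0 ∈ Ici 0 := fun x => le_max_right x 0
  have hg' := hg.comp_continuous hmax hmem
  have hw' := hw.comp_continuous hmax hmem
  have hcont : Continuous fun z => ∫ u in (0:ℝ)..z, g (max u 0) * w (max (z - u) 0) :=
    continuous_parametric_intervalIntegral_of_continuous
      (f := fun z u => g (max u 0) * w (max (z - u) 0))
      ((hg'.comp continuous_snd).mul (hw'.comp (continuous_fst.sub continuous_snd))) continuous_id
  refine hcont.continuousOn.congr fun z (hz : 0 ≤ z) => integral_congr fun u hu => ?_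
  rw [uIcc_of_le hz] at hu
  simp only [max_eq_left hu.1, max_eq_left (sub_nonneg.2 hu.2)]

theorem continuousOn_mul_comp_sub {g w : ℝ → ℝ} (hg : ContinuousOn g (Ici 0))
    (hw : ContinuousOn w (Ici 0)) :
    ContinuousOn (fun p : ℝ × ℝ => g p.2 * w (p.1 - p.2)) {p | 0 ≤ p.2 ∧ p.2 ≤ p.1} :=
  (hg.comp continuousOn_snd fun _ hp => hp.1).mul
    (hw.comp (continuousOn_fst.sub continuousOn_snd) fun _ hp => sub_nonneg.2 hp.2)

theorem isCompact_triangle (a b : ℝ) :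
    IsCompact {p : ℝ × ℝ | a ≤ p.2 ∧ p.2 ≤ p.1 ∧ p.1 ≤ b} := by
  refine (isCompact_Icc.prod isCompact_Icc : IsCompact (Icc a b ×ˢ Icc a b)).of_isClosed_subset
    ?_ ?_
  · exact (isClosed_le continuous_const continuous_snd).inter
      ((isClosed_le continuous_snd continuous_fst).inter
        (isClosed_le continuous_fst continuous_const))
  · rintro p ⟨h2, h21, h1⟩
    exact ⟨⟨h2.trans h21, h1⟩, h2, h21.trans h1⟩

theorem integral_intervalIntegral_mul_comp_sub_deriv {g W W' : ℝ → ℝ} {t : ℝ} (ht : 0 ≤ t)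
    (hg : ContinuousOn g (Ici 0)) (hW : ∀ z, 0 ≤ z → HasDerivAt W (W' z) z)
    (hW' : ContinuousOn W' (Ici 0)) :
    ∫ z in (0:ℝ)..t, ∫ u in (0:ℝ)..z, g u * W' (z - u)
      = ∫ u in (0:ℝ)..t, g u * (W (t - u) - W 0) := by
  have hint : IntegrableOn (fun p : ℝ × ℝ => g p.2 * W' (p.1 - p.2))
      {p | 0 < p.2 ∧ p.2 < p.1 ∧ p.1 ≤ t} :=
    ((continuousOn_mul_comp_sub hg hW').mono fun _ hp => ⟨hp.1, hp.2.1⟩).integrableOn_compact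
      (isCompact_triangle 0 t) |>.mono_set fun _ hp => ⟨hp.1.le, hp.2.1.le, hp.2.2⟩
  rw [intervalIntegral_intervalIntegral_swap_triangle (f := fun z u => g u * W' (z - u)) ht hint]
  refine integral_congr fun u hu => ?_
  rw [uIcc_of_le ht] at hu
  have htu : 0 ≤ t - u := sub_nonneg.2 hu.2
  rw [intervalIntegral.integral_const_mul, integral_comp_sub_right, sub_self,
    integral_eq_sub_of_hasDerivAt (fun s hs => hW s (by rw [uIcc_of_le htu] at hs; exact hs.1))
      ((hW'.mono (by rw [uIcc_of_le htu]; exact Icc_subset_Ici_self)).intervalIntegrable)]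

theorem integral_add_intervalIntegral_mul_comp_sub_deriv {g W W' : ℝ → ℝ} {t : ℝ} (ht : 0 ≤ t)
    (hg : ContinuousOn g (Ici 0)) (hW : ∀ z, 0 ≤ z → HasDerivAt W (W' z) z)
    (hW' : ContinuousOn W' (Ici 0)) (hW0 : W 0 = 1) :
    ∫ z in (0:ℝ)..t, (g z + ∫ u in (0:ℝ)..z, g u * W' (z - u))
      = ∫ u in (0:ℝ)..t, g u * W (t - u) := by
  have hsub : uIcc 0 t ⊆ Ici 0 := by rw [uIcc_of_le ht]; exact Icc_subset_Ici_self
  have hg_int : IntervalIntegrable g volume 0 t := (hg.mono hsub).intervalIntegrable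
  have hconv_int : IntervalIntegrable (fun z => ∫ u in (0:ℝ)..z, g u * W' (z - u)) volume 0 t :=
    ((continuousOn_intervalIntegral_mul_comp_sub hg hW').mono hsub).intervalIntegrable
  have hshift : MapsTo (fun u => t - u) (uIcc 0 t) (Ici 0) := fun u hu => by
    rw [uIcc_of_le ht] at hu
    exact sub_nonneg.2 hu.2
  have hprod_int : IntervalIntegrable (fun u => g u * (W (t - u) - W 0)) volume 0 t :=
    ((hg.mono hsub).mul (((HasDerivAt.continuousOn hW).comp
      (continuousOn_const.sub continuousOn_id) hshift).sub continuousOn_const)).intervalIntegrable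
  rw [intervalIntegral.integral_add hg_int hconv_int,
    integral_intervalIntegral_mul_comp_sub_deriv ht hg hW hW',
    ← intervalIntegral.integral_add hg_int hprod_int]
  refine integral_congr fun u _ => ?_
  simp only [hW0]
  ring

/-- Computation of the sampling probability `p` (Equation (14) of the paper): integrating the
density of the first sampling time `S₁` over `(0,t)` yields `C(t)/(b U(t))`, i.e.
`∫₀^t (c₂ g₂(z) + c₂ ∫₀^z g₂(u) W'(z-u) du - C(z) C(t)/(b U(t))) dz = C(t)/(b U(t))`. -/
theorem prob_at_least_one_sample
    (b c₂ q t : ℝ) (hb : 0 < b) (hc₂ : c₂ ∈ Ioo (0:ℝ) 1) (hq : q = b * c₂) (ht : 0 < t)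
    (g₂ : ℝ → ℝ) (hg₂cont : ContinuousOn g₂ (Ici 0)) (hg₂nn : ∀ u, 0 ≤ u → 0 ≤ g₂ u)
    (W W' : ℝ → ℝ)
    (hWnn : ∀ z, 0 ≤ z → 0 ≤ W z)
    (hW0 : W 0 = 1)
    (hWderiv : ∀ z, 0 ≤ z → HasDerivAt W (W' z) z)
    (hW'cont : ContinuousOn W' (Ici 0))
    (C U : ℝ → ℝ)
    (hC : ∀ z, C z = q * ∫ u in (0:ℝ)..z, W (z - u) * g₂ u)
    (hU : ∀ z, U z = 1 + ∫ x in (0:ℝ)..z, C x) :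
    ∫ z in (0:ℝ)..t,
        (c₂ * g₂ z + c₂ * (∫ u in (0:ℝ)..z, g₂ u * W' (z - u))
          - C z * C t / (b * U t))
      = C t / (b * U t) := by
  have hsub : uIcc 0 t ⊆ Ici 0 := by rw [uIcc_of_le ht.le]; exact Icc_subset_Ici_self
  have hC' : C = fun z => q * ∫ u in (0:ℝ)..z, g₂ u * W (z - u) := by
    funext z; simp only [hC, mul_comm (W _)]
  have hCnn : ∀ z, 0 ≤ z → 0 ≤ C z := fun z hz => by
    rw [hC']
    refine mul_nonneg (hq ▸ mul_nonneg hb.le hc₂.1.le) (integral_nonneg hz fun u hu => ?_)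
    exact mul_nonneg (hg₂nn u hu.1) (hWnn _ (sub_nonneg.2 hu.2))
  have hUt : 0 < U t := by
    rw [hU]
    linarith [integral_nonneg (μ := volume) ht.le fun x hx => hCnn x hx.1]
  have hCcont : ContinuousOn C (Ici 0) := by
    rw [hC']
    exact continuousOn_const.mul <| continuousOn_intervalIntegral_mul_comp_sub hg₂cont
      (HasDerivAt.continuousOn hWderiv)
  have hdensity_int : IntervalIntegrable
      (fun z => c₂ * (g₂ z + ∫ u in (0:ℝ)..z, g₂ u * W' (z - u))) volume 0 t :=
    (continuousOn_const.mul (hg₂cont.add (continuousOn_intervalIntegral_mul_comp_sub hg₂cont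
      hW'cont))).mono hsub |>.intervalIntegrable
  have hC_int : IntervalIntegrable (fun z => C z * (C t / (b * U t))) volume 0 t :=
    ((hCcont.mul continuousOn_const).mono hsub).intervalIntegrable
  calc _ = (∫ z in (0:ℝ)..t, c₂ * (g₂ z + ∫ u in (0:ℝ)..z, g₂ u * W' (z - u)))
          - ∫ z in (0:ℝ)..t, C z * (C t / (b * U t)) := by
        rw [← intervalIntegral.integral_sub hdensity_int hC_int]
        congr 1 with z
        ring
    _ = c₂ * (∫ u in (0:ℝ)..t, g₂ u * W (t - u)) - (U t - 1) * (C t / (b * U t)) := by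
        rw [intervalIntegral.integral_const_mul, intervalIntegral.integral_mul_const,
          integral_add_intervalIntegral_mul_comp_sub_deriv ht.le hg₂cont hWderiv hW'cont hW0, hU]
        ring
    _ = C t / (b * U t) := by
        rw [hC', hq]
        field_simp
        ring
end

section
/- For every integer n ≥ 1 and all real numbers z₁, …, z_n and y₂, …, y_n, the likelihood L = g(z₁)·k(z_n)·∏_{i=2}^{n} f(z_{i−1}; y_i, z_i) satisfies L = b^{n−1}·μ^{n}·(1/Q(t))·( ∏_{i=1}^{n} Q(t−z_i) )/( ∏_{i=2}^{n} Q(t−y_i) ); that is, the likelihood of a sampled tree derived in this paper for the Markovian case agrees exactly with the previously derived likelihood formula of Stadler et al. -/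
/-!
With `γ = α₁ + α₂` one has `γ₁ = γ` and `γ₂ = (α₁ - α₂) / γ`, so `Q` is a perfect square:
`Q (t - x) = 4 / γ² · A(x)² / e^{γ (t - x)}` where `A(x) = α₂ + α₁ e^{γ (t - x)}` is the factor
occurring in `g`, `k` and `f`. In these terms each branching factor satisfies
`k(w) f(u; v, w) Q(t - v) = b μ k(u) Q(t - w)`, so the product over the branching events telescopes,
and the remaining boundary term is `g(z) k(z) Q(t) = μ Q(t - z)`.
-/

open Real Finset

theorem abs_lt_sqrt_sq_add {x c : ℝ} (hc : 0 < c) : |x| < √(x ^ 2 + c) := by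
  rw [Real.lt_sqrt (abs_nonneg x), sq_abs]
  linarith

theorem stadlerQ_eq_mul_sq {a₁ a₂ γ₁ γ₂ : ℝ} (hγ₁ : γ₁ = a₁ + a₂) (hγ₁0 : γ₁ ≠ 0)
    (hγ₂ : γ₂ = (a₁ - a₂) / γ₁) (s : ℝ) :
    2 * (1 - γ₂ ^ 2) + exp (-γ₁ * s) * (1 - γ₂) ^ 2 + exp (γ₁ * s) * (1 + γ₂) ^ 2
      = 4 / γ₁ ^ 2 * (a₂ + a₁ * exp (γ₁ * s)) ^ 2 / exp (γ₁ * s) := by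
  subst hγ₂
  rw [neg_mul, exp_neg]
  field_simp
  rw [hγ₁]
  ring

theorem mul_prod_Icc_telescope {α M : Type*} [CommMonoid M] {k q : α → M}
    {f : α → α → α → M} {c : M} (hstep : ∀ u v w, k w * f u v w * q v = c * k u * q w)
    {n : ℕ} (hn : 1 ≤ n) (z y : ℕ → α) :
    k (z n) * (∏ i ∈ Icc 2 n, f (z (i - 1)) (y i) (z i)) * ∏ i ∈ Icc 2 n, q (y i)
      = c ^ (n - 1) * k (z 1) * ∏ i ∈ Icc 2 n, q (z i) := by
  induction n, hn using Nat.le_induction with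
  | base => simp
  | succ n hn ih =>
    have h2 : 2 ≤ n + 1 := by omega
    rw [prod_Icc_succ_top h2, prod_Icc_succ_top h2, prod_Icc_succ_top h2, Nat.add_sub_cancel]
    calc k (z (n + 1))
          * ((∏ i ∈ Icc 2 n, f (z (i - 1)) (y i) (z i)) * f (z n) (y (n + 1)) (z (n + 1)))
          * ((∏ i ∈ Icc 2 n, q (y i)) * q (y (n + 1)))
        = (k (z (n + 1)) * f (z n) (y (n + 1)) (z (n + 1)) * q (y (n + 1)))
          * (∏ i ∈ Icc 2 n, f (z (i - 1)) (y i) (z i)) * ∏ i ∈ Icc 2 n, q (y i) := by ac_rfl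
      _ = c * (k (z n) * (∏ i ∈ Icc 2 n, f (z (i - 1)) (y i) (z i)) * ∏ i ∈ Icc 2 n, q (y i))
          * q (z (n + 1)) := by rw [hstep]; ac_rfl
      _ = c ^ n * k (z 1) * ((∏ i ∈ Icc 2 n, q (z i)) * q (z (n + 1))) := by
        rw [ih, ← pow_sub_one_mul (by omega : n ≠ 0)]; ac_rfl

namespace MarkovianHIV

variable (α₁ α₂ t : ℝ)

noncomputable def A (x : ℝ) : ℝ := α₂ + α₁ * exp ((α₁ + α₂) * (t - x))

noncomputable def g (μ z : ℝ) : ℝ := μ * exp (α₂ * z) * A α₁ α₂ t z / A α₁ α₂ t 0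

noncomputable def k (z : ℝ) : ℝ := exp (α₁ * z) * A α₁ α₂ t z / A α₁ α₂ t 0

noncomputable def f (b μ x y z : ℝ) : ℝ :=
  b * μ * exp (α₁ * (x - y)) * exp (α₂ * (z - y)) * A α₁ α₂ t x * A α₁ α₂ t z / A α₁ α₂ t y ^ 2

variable {α₁ α₂ t}

theorem A_pos (hα₁ : 0 ≤ α₁) (hα₂ : 0 < α₂) (x : ℝ) : 0 < A α₁ α₂ t x := by
  unfold A
  positivity

variable {Q : ℝ → ℝ} {C : ℝ}

theorem k_mul_f_mul_Q (hα₁ : 0 ≤ α₁) (hα₂ : 0 < α₂)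
    (hQ : ∀ x, Q (t - x) = C * A α₁ α₂ t x ^ 2 / exp ((α₁ + α₂) * (t - x))) (b μ u v w : ℝ) :
    k α₁ α₂ t w * f α₁ α₂ t b μ u v w * Q (t - v) = b * μ * k α₁ α₂ t u * Q (t - w) := by
  have hexp : exp (α₁ * w) * exp (α₁ * (u - v)) * exp (α₂ * (w - v)) * exp ((α₁ + α₂) * (t - w))
      = exp (α₁ * u) * exp ((α₁ + α₂) * (t - v)) := by
    simp only [← exp_add]
    ring_nf
  have hv := (A_pos hα₁ hα₂ (t := t) v).ne'
  have h0 := (A_pos hα₁ hα₂ (t := t) 0).ne'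
  rw [hQ, hQ, k, k, f]
  field_simp
  linear_combination b * μ * C * A α₁ α₂ t u * A α₁ α₂ t w ^ 2 * hexp

theorem g_mul_k_mul_Q (hα₁ : 0 ≤ α₁) (hα₂ : 0 < α₂)
    (hQ : ∀ x, Q (t - x) = C * A α₁ α₂ t x ^ 2 / exp ((α₁ + α₂) * (t - x))) (μ z : ℝ) :
    g α₁ α₂ t μ z * k α₁ α₂ t z * Q t = μ * Q (t - z) := by
  have hexp : exp (α₂ * z) * exp (α₁ * z) * exp ((α₁ + α₂) * (t - z))
      = exp ((α₁ + α₂) * t) := by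
    simp only [← exp_add]
    ring_nf
  have h0 := (A_pos hα₁ hα₂ (t := t) 0).ne'
  have hQt := hQ 0
  rw [sub_zero] at hQt
  rw [hQt, hQ, g, k, ← hexp]
  field_simp

theorem likelihood_eq (hα₁ : 0 ≤ α₁) (hα₂ : 0 < α₂) (hC : C ≠ 0)
    (hQ : ∀ x, Q (t - x) = C * A α₁ α₂ t x ^ 2 / exp ((α₁ + α₂) * (t - x))) (b μ : ℝ)
    {n : ℕ} (hn : 1 ≤ n) (z y : ℕ → ℝ) :
    g α₁ α₂ t μ (z 1) * k α₁ α₂ t (z n) * ∏ i ∈ Icc 2 n, f α₁ α₂ t b μ (z (i - 1)) (y i) (z i)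
      = b ^ (n - 1) * μ ^ n * (1 / Q t) * (∏ i ∈ Icc 1 n, Q (t - z i))
        / ∏ i ∈ Icc 2 n, Q (t - y i) := by
  have hQ0 : ∀ x, Q (t - x) ≠ 0 := fun x => by
    rw [hQ]
    have := (A_pos hα₁ hα₂ (t := t) x).ne'
    positivity
  have hQt : Q t ≠ 0 := by simpa using hQ0 0
  have htele := mul_prod_Icc_telescope (q := fun x => Q (t - x))
    (k_mul_f_mul_Q hα₁ hα₂ hQ b μ) hn z y
  have hbase := g_mul_k_mul_Q hα₁ hα₂ hQ μ (z 1)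
  have hsplit : ∏ i ∈ Icc 1 n, Q (t - z i) = Q (t - z 1) * ∏ i ∈ Icc 2 n, Q (t - z i) := by
    rw [← mul_prod_Ioc_eq_prod_Icc hn, ← Icc_add_one_left_eq_Ioc]
    rfl
  rw [eq_div_iff (prod_ne_zero_iff.2 fun i _ => hQ0 (y i)), hsplit]
  field_simp
  rw [← pow_sub_one_mul (by omega : n ≠ 0) μ, ← mul_assoc, ← mul_pow]
  linear_combination g α₁ α₂ t μ (z 1) * Q t * htele
    + (b * μ) ^ (n - 1) * (∏ i ∈ Icc 2 n, Q (t - z i)) * hbase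

end MarkovianHIV

theorem markovian_likelihood_agrees_with_stadler_general
    (b d μ t : ℝ) (hb : 0 < b) (hμ : 0 < μ)
    (α₁ α₂ γ γ₁ γ₂ : ℝ)
    (hα₁ : α₁ = (d + μ - b + Real.sqrt ((μ + d - b) ^ 2 + 4 * b * μ)) / 2)
    (hα₂ : α₂ = (b - d - μ + Real.sqrt ((μ + d - b) ^ 2 + 4 * b * μ)) / 2)
    (hγ : γ = α₁ + α₂)
    (hγ₁ : γ₁ = Real.sqrt ((b - d - μ) ^ 2 + 4 * b * μ))
    (hγ₂ : γ₂ = -(b - d - μ) / γ₁)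
    (g k Q : ℝ → ℝ) (f : ℝ → ℝ → ℝ → ℝ)
    (hg : ∀ z : ℝ, g z = μ * Real.exp (α₂ * z) * (α₂ + α₁ * Real.exp (γ * (t - z)))
      / (α₂ + α₁ * Real.exp (γ * t)))
    (hk : ∀ z : ℝ, k z = Real.exp (α₁ * z) * (α₂ + α₁ * Real.exp (γ * (t - z)))
      / (α₂ + α₁ * Real.exp (γ * t)))
    (hf : ∀ x y z : ℝ, f x y z
      = b * μ * Real.exp (α₁ * (x - y)) * Real.exp (α₂ * (z - y))
        * (α₂ + α₁ * Real.exp (γ * (t - x))) * (α₂ + α₁ * Real.exp (γ * (t - z)))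
        / (α₂ + α₁ * Real.exp (γ * (t - y))) ^ 2)
    (hQ : ∀ x : ℝ, Q x = 2 * (1 - γ₂ ^ 2) + Real.exp (-γ₁ * x) * (1 - γ₂) ^ 2
      + Real.exp (γ₁ * x) * (1 + γ₂) ^ 2)
    (n : ℕ) (hn : 1 ≤ n) (z y : ℕ → ℝ) :
    g (z 1) * k (z n) * ∏ i ∈ Finset.Icc 2 n, f (z (i - 1)) (y i) (z i)
      = b ^ (n - 1) * μ ^ n * (1 / Q t) * (∏ i ∈ Finset.Icc 1 n, Q (t - z i))
        / ∏ i ∈ Finset.Icc 2 n, Q (t - y i) := by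
  subst hγ
  have hroot := abs_lt.1 (abs_lt_sqrt_sq_add (x := μ + d - b) (by positivity : 0 < 4 * b * μ))
  have hα₁pos : 0 < α₁ := by rw [hα₁]; linarith
  have hα₂pos : 0 < α₂ := by rw [hα₂]; linarith
  have hγ₁_eq : γ₁ = α₁ + α₂ := by rw [hγ₁, hα₁, hα₂]; ring_nf
  have hγ₂_eq : γ₂ = (α₁ - α₂) / γ₁ := by rw [hγ₂, hα₁, hα₂]; ring
  obtain rfl : g = MarkovianHIV.g α₁ α₂ t μ := by
    funext z; simp [hg, MarkovianHIV.g, MarkovianHIV.A]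
  obtain rfl : k = MarkovianHIV.k α₁ α₂ t := by
    funext z; simp [hk, MarkovianHIV.k, MarkovianHIV.A]
  obtain rfl : f = MarkovianHIV.f α₁ α₂ t b μ := by
    funext x y z; simp [hf, MarkovianHIV.f, MarkovianHIV.A]
  have hγ₁0 : γ₁ ≠ 0 := by rw [hγ₁_eq]; positivity
  refine MarkovianHIV.likelihood_eq hα₁pos.le hα₂pos (C := 4 / γ₁ ^ 2) (by positivity)
    (fun x => ?_) b μ hn z y
  rw [hQ, stadlerQ_eq_mul_sq hγ₁_eq hγ₁0 hγ₂_eq, hγ₁_eq]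
  rfl

/-- In the Markovian case, the likelihood of a sampled tree derived in this paper,
`L = g(z₁) k(z_n) ∏_{i=2}^n f(z_{i-1}; y_i, z_i)`, agrees exactly with the previously derived
likelihood formula of Stadler et al.:
`L = b^{n-1} μ^n (1/Q(t)) (∏_{i=1}^n Q(t-z_i)) / (∏_{i=2}^n Q(t-y_i))`. -/
theorem markovian_likelihood_agrees_with_stadler
    (b d μ t : ℝ) (hb : 0 < b) (hd : 0 < d) (hμ : 0 < μ) (ht : 0 < t)
    (α₁ α₂ γ γ₁ γ₂ : ℝ)
    (hα₁ : α₁ = (d + μ - b + Real.sqrt ((μ + d - b) ^ 2 + 4 * b * μ)) / 2)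
    (hα₂ : α₂ = (b - d - μ + Real.sqrt ((μ + d - b) ^ 2 + 4 * b * μ)) / 2)
    (hγ : γ = α₁ + α₂)
    (hγ₁ : γ₁ = Real.sqrt ((b - d - μ) ^ 2 + 4 * b * μ))
    (hγ₂ : γ₂ = -(b - d - μ) / γ₁)
    (g k Q : ℝ → ℝ) (f : ℝ → ℝ → ℝ → ℝ)
    (hg : ∀ z : ℝ, g z = μ * Real.exp (α₂ * z) * (α₂ + α₁ * Real.exp (γ * (t - z)))
      / (α₂ + α₁ * Real.exp (γ * t)))
    (hk : ∀ z : ℝ, k z = Real.exp (α₁ * z) * (α₂ + α₁ * Real.exp (γ * (t - z)))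
      / (α₂ + α₁ * Real.exp (γ * t)))
    (hf : ∀ x y z : ℝ, f x y z
      = b * μ * Real.exp (α₁ * (x - y)) * Real.exp (α₂ * (z - y))
        * (α₂ + α₁ * Real.exp (γ * (t - x))) * (α₂ + α₁ * Real.exp (γ * (t - z)))
        / (α₂ + α₁ * Real.exp (γ * (t - y))) ^ 2)
    (hQ : ∀ x : ℝ, Q x = 2 * (1 - γ₂ ^ 2) + Real.exp (-γ₁ * x) * (1 - γ₂) ^ 2
      + Real.exp (γ₁ * x) * (1 + γ₂) ^ 2)
    (n : ℕ) (hn : 1 ≤ n) (z y : ℕ → ℝ) :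
    g (z 1) * k (z n) * ∏ i ∈ Finset.Icc 2 n, f (z (i - 1)) (y i) (z i)
      = b ^ (n - 1) * μ ^ n * (1 / Q t) * (∏ i ∈ Finset.Icc 1 n, Q (t - z i))
        / ∏ i ∈ Finset.Icc 2 n, Q (t - y i) :=
  markovian_likelihood_agrees_with_stadler_general b d μ t hb hμ α₁ α₂ γ γ₁ γ₂ hα₁ hα₂ hγ hγ₁ hγ₂ g
    k Q f hg hk hf hQ n hn z y
end
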